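/- arXiv:2005.05563 — 8 statements merged into one kernel-verified Lean document; each statement's English description precedes it below -/
import Mathlib

section
/- Let p and ℓ be primes with ord_ℓ(p) = ℓ−1, let q = p^((ℓ−1)k) for a positive integer k, let ω be a generator of the multiplicative group F_q^*, and let φ : x ↦ x^p be the Frobenius. Then the subgroup of permutations of F_q^* generated by multiplication by ω^ℓ and by φ has exactly two orbits on F_q^*: the subgroup C = ⟨ω^ℓ⟩ and its complement F_q^* \ C. -/
/-!
Write `C = ⟨ω ^ ℓ⟩`. Since `ℓ ∣ q - 1 = |F_q^*|`, an element `ω ^ i` lies in `C` iff `ℓ ∣ i`.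
Multiplication by `ω ^ ℓ` shifts exponents by multiples of `ℓ`, and `φ` multiplies them by `p`,
which is a unit mod `ℓ`; so both generators preserve `C`, and the group they generate moves
`ω ^ i` exactly to the `ω ^ j` with `j ≡ p ^ t i (mod ℓ)` for some `t`. As `p` generates
`(ℤ/ℓ)ˣ`, these `j` are the multiples of `ℓ` when `ℓ ∣ i` and the non-multiples otherwise.
-/

open Subgroup Equiv MulAction
open scoped Pointwise

theorem zpow_mem_zpowers_pow_iff {M : Type*} [Group M] {ω : M} {ℓ : ℕ} (hℓ : ℓ ∣ orderOf ω)
    (i : ℤ) : ω ^ i ∈ zpowers (ω ^ ℓ) ↔ (ℓ : ℤ) ∣ i := by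
  refine ⟨?_, ?_⟩
  · rintro ⟨m, hm⟩
    have hpow : ω ^ (ℓ * m - i) = 1 := by
      rw [zpow_sub, zpow_mul, zpow_natCast, ← hm, mul_inv_cancel]
    have hsub : (ℓ : ℤ) ∣ ℓ * m - i :=
      (Int.natCast_dvd_natCast.mpr hℓ).trans (orderOf_dvd_iff_zpow_eq_one.mpr hpow)
    simpa using (dvd_mul_right (ℓ : ℤ) m).sub hsub
  · rintro ⟨m, rfl⟩
    exact ⟨m, by simp [zpow_mul]⟩

theorem ne_zero_of_orderOf_eq_card_sub_one {G₀ : Type*} [GroupWithZero G₀] [Finite G₀] {g : G₀}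
    (hg : orderOf g = Nat.card G₀ - 1) : g ≠ 0 := by
  rintro rfl
  have := pow_orderOf_eq_one (0 : G₀)
  rw [hg, zero_pow (by have := Finite.one_lt_card (α := G₀); omega)] at this
  exact zero_ne_one this

theorem exists_pow_mul_eq_of_orderOf_eq_card_sub_one {G₀ : Type*} [GroupWithZero G₀] [Finite G₀]
    {g : G₀} (hg : orderOf g = Nat.card G₀ - 1) {a b : G₀} (hab : a = 0 ↔ b = 0) :
    ∃ t : ℕ, g ^ t * a = b := by
  by_cases ha : a = 0
  · exact ⟨0, by simp [ha, hab.mp ha]⟩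
  have hb : b ≠ 0 := fun hb => ha (hab.mpr hb)
  set u := Units.mk0 g (ne_zero_of_orderOf_eq_card_sub_one hg)
  have hu : zpowers u = ⊤ := by
    apply eq_top_of_card_eq
    rw [Nat.card_zpowers, ← orderOf_units, Units.val_mk0, hg, Nat.card_units]
  obtain ⟨t, ht⟩ :=
    mem_powers_iff_mem_zpowers.mpr (hu ▸ mem_top (Units.mk0 b hb / Units.mk0 a ha))
  refine ⟨t, ?_⟩
  rw [← Units.val_mk0 (ne_zero_of_orderOf_eq_card_sub_one hg), ← Units.val_pow_eq_pow_val]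
  simp [u, ht, div_mul_cancel₀ b ha]

theorem Equiv.Perm.pow_apply_eq_pow_pow {M : Type*} [Monoid M] {φ : Perm M} {p : ℕ}
    (hφ : ∀ x, φ x = x ^ p) (t : ℕ) (x : M) : (φ ^ t) x = x ^ p ^ t := by
  induction t with
  | zero => simp
  | succ t ih => rw [pow_succ', Perm.mul_apply, ih, hφ, ← pow_mul, pow_succ]

section CyclicGroup

variable {M : Type*} [Group M] {ω : M} {ℓ p : ℕ}

theorem closure_mulLeft_pow_le_stabilizer_zpowers [Fact ℓ.Prime] (hω : ∀ x, x ∈ zpowers ω)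
    (hℓ : ℓ ∣ orderOf ω) (hp : (p : ZMod ℓ) ≠ 0) {φ : Perm M} (hφ : ∀ x, φ x = x ^ p) :
    closure {Equiv.mulLeft (ω ^ ℓ), φ} ≤ stabilizer (Perm M) (zpowers (ω ^ ℓ) : Set M) := by
  rw [closure_le]
  rintro σ (rfl | rfl) <;> rw [SetLike.mem_coe, mem_stabilizer_set] <;> intro x
  · exact mul_mem_cancel_left (mem_zpowers _)
  · obtain ⟨i, rfl⟩ := mem_zpowers_iff.mp (hω x)
    rw [Perm.smul_def, hφ, ← zpow_natCast (ω ^ i) p, ← zpow_mul, SetLike.mem_coe, SetLike.mem_coe,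
      zpow_mem_zpowers_pow_iff hℓ, zpow_mem_zpowers_pow_iff hℓ,
      ← ZMod.intCast_zmod_eq_zero_iff_dvd, ← ZMod.intCast_zmod_eq_zero_iff_dvd]
    push_cast
    simp [hp]

theorem mem_orbit_closure_mulLeft_pow_iff (hω : ∀ x, x ∈ zpowers ω) (hℓ : ℓ.Prime)
    (hdvd : ℓ ∣ orderOf ω) (hord : orderOf (p : ZMod ℓ) = ℓ - 1) {φ : Perm M}
    (hφ : ∀ x, φ x = x ^ p) {x y : M} :
    y ∈ orbit (closure {Equiv.mulLeft (ω ^ ℓ), φ}) x ↔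
      (x ∈ zpowers (ω ^ ℓ) ↔ y ∈ zpowers (ω ^ ℓ)) := by
  have := Fact.mk hℓ
  have hord' : orderOf (p : ZMod ℓ) = Nat.card (ZMod ℓ) - 1 := by rwa [Nat.card_zmod]
  constructor
  · rintro ⟨⟨σ, hσ⟩, rfl⟩
    exact (mem_stabilizer_set.mp (closure_mulLeft_pow_le_stabilizer_zpowers hω hdvd
      (ne_zero_of_orderOf_eq_card_sub_one hord') hφ hσ) x).symm
  · intro hxy
    obtain ⟨i, rfl⟩ := mem_zpowers_iff.mp (hω x)
    obtain ⟨j, rfl⟩ := mem_zpowers_iff.mp (hω y)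
    simp only [zpow_mem_zpowers_pow_iff hdvd, ← ZMod.intCast_zmod_eq_zero_iff_dvd] at hxy
    obtain ⟨t, ht⟩ := exists_pow_mul_eq_of_orderOf_eq_card_sub_one hord' hxy
    obtain ⟨s, hs⟩ : (ℓ : ℤ) ∣ j - i * p ^ t := by
      rw [← ZMod.intCast_zmod_eq_zero_iff_dvd]
      push_cast
      rw [← ht]
      ring
    refine ⟨⟨Equiv.mulLeft (ω ^ ℓ) ^ s * φ ^ t, mul_mem (zpow_mem (subset_closure (by simp)) s)
      (pow_mem (subset_closure (by simp)) t)⟩, ?_⟩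
    change (Equiv.mulLeft (ω ^ ℓ) ^ s * φ ^ t) (ω ^ i) = ω ^ j
    rw [show j = ℓ * s + i * p ^ t by linarith, zpow_add, zpow_mul, zpow_mul, Perm.mul_apply,
      Perm.pow_apply_eq_pow_pow hφ, zpow_mulLeft, coe_mulLeft]
    norm_cast

end CyclicGroup

theorem stmt_2_general (p ℓ k : ℕ) (hℓ : ℓ.Prime)
    (hord : orderOf (p : ZMod ℓ) = ℓ - 1)
    (F : Type*) [Field F] [Fintype F] (hcard : Fintype.card F = p ^ ((ℓ - 1) * k))
    (ω : Fˣ) (hω : ∀ x : Fˣ, x ∈ Subgroup.zpowers ω)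
    (φ : Equiv.Perm Fˣ) (hφ : ∀ x : Fˣ, φ x = x ^ p) :
    MulAction.orbit (Subgroup.closure {Equiv.mulLeft (ω ^ ℓ), φ}) (1 : Fˣ) =
        (Subgroup.zpowers (ω ^ ℓ) : Set Fˣ) ∧
      ∀ x : Fˣ, x ∉ (Subgroup.zpowers (ω ^ ℓ) : Set Fˣ) →
        MulAction.orbit (Subgroup.closure {Equiv.mulLeft (ω ^ ℓ), φ}) x =
          (Subgroup.zpowers (ω ^ ℓ) : Set Fˣ)ᶜ := by
  have hdvd : ℓ ∣ orderOf ω := by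
    rw [orderOf_eq_card_of_forall_mem_zpowers hω, Nat.card_units, Nat.card_eq_fintype_card,
      hcard, ← Nat.modEq_iff_dvd' (hcard ▸ Fintype.card_pos), ← ZMod.natCast_eq_natCast_iff]
    push_cast
    rw [pow_mul, ← hord, pow_orderOf_eq_one, one_pow]
  refine ⟨Set.ext fun y => ?_, fun x hx => Set.ext fun y => ?_⟩ <;>
    rw [mem_orbit_closure_mulLeft_pow_iff hω hℓ hdvd hord hφ]
  · simp [one_mem]
  · simp_all

theorem stmt_2 (p ℓ k : ℕ) (hp : p.Prime) (hℓ : ℓ.Prime)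
    (hord : orderOf (p : ZMod ℓ) = ℓ - 1) (hk : 1 ≤ k)
    (F : Type*) [Field F] [Fintype F] (hcard : Fintype.card F = p ^ ((ℓ - 1) * k))
    (ω : Fˣ) (hω : ∀ x : Fˣ, x ∈ Subgroup.zpowers ω)
    (φ : Equiv.Perm Fˣ) (hφ : ∀ x : Fˣ, φ x = x ^ p) :
    MulAction.orbit (Subgroup.closure {Equiv.mulLeft (ω ^ ℓ), φ}) (1 : Fˣ) =
        (Subgroup.zpowers (ω ^ ℓ) : Set Fˣ) ∧
      ∀ x : Fˣ, x ∉ (Subgroup.zpowers (ω ^ ℓ) : Set Fˣ) →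
        MulAction.orbit (Subgroup.closure {Equiv.mulLeft (ω ^ ℓ), φ}) x =
          (Subgroup.zpowers (ω ^ ℓ) : Set Fˣ)ᶜ :=
  stmt_2_general p ℓ k hℓ hord F hcard ω hω φ hφ
end

section
/- Let p ≡ 3 (mod 4) be a prime, r an even positive integer, q = p^r, ω a generator of F_q^*, and C = ⟨ω^4⟩. Then the subgroup of Sym(F_q^*) generated by multiplication by ω^4 and by the map x ↦ x^p·ω has exactly two orbits on F_q^*, namely C ∪ Cω and Cω^2 ∪ Cω^3. -/
/-!
Let `κ x ∈ ZMod 4` be the exponent of `x` to the base `ω`, taken mod 4; it is well defined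
because `p ^ r ≡ 1 [MOD 4]`. Multiplication by `ω ^ 4` preserves `κ`, and `ψ` acts on it by
`κ ↦ p κ + 1 = 1 - κ`. So the pair `{κ, 1 - κ}` is invariant, while powers of `ω ^ 4` already
connect any two elements with the same `κ`: the orbit of `x` is `{y | κ y ∈ {κ x, 1 - κ x}}`,
and these pairs are `{0, 1}` and `{2, 3}`.
-/

open Subgroup Equiv MulAction

theorem Equiv.Perm.apply_eq_of_mem_closure {α β : Type*} {s : Set (Perm α)} (f : α → β)
    (hs : ∀ σ ∈ s, ∀ x, f (σ x) = f x) {σ : Perm α} (hσ : σ ∈ closure s) (x : α) :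
    f (σ x) = f x := by
  induction hσ using closure_induction generalizing x with
  | mem σ h => exact hs σ h x
  | one => rfl
  | mul σ τ _ _ hσ hτ => rw [Perm.mul_apply, hσ, hτ]
  | inv σ _ hσ => simpa using (hσ (σ⁻¹ x)).symm

section dlogMod

variable {G : Type*} [Group G] {g : G} (hg : ∀ x, x ∈ zpowers g) {d : ℕ} (hd : d ∣ Nat.card G)

/-- The exponent of `x` to the base `g`, reduced modulo a divisor `d` of the group order. -/
noncomputable def dlogMod (x : G) : ZMod d :=
  ZMod.castHom hd (ZMod d) ((zmodMulEquivOfGenerator hg rfl).symm x).toAdd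

theorem dlogMod_zpow (i : ℤ) : dlogMod hg hd (g ^ i) = i := by
  simp [dlogMod]

theorem dlogMod_generator : dlogMod hg hd g = 1 := by
  simpa using dlogMod_zpow hg hd 1

theorem dlogMod_mul (x y : G) : dlogMod hg hd (x * y) = dlogMod hg hd x + dlogMod hg hd y := by
  simp only [dlogMod, map_mul, toAdd_mul, map_add]

theorem dlogMod_inv (x : G) : dlogMod hg hd x⁻¹ = -dlogMod hg hd x := by
  simp only [dlogMod, map_inv, toAdd_inv, map_neg]

theorem dlogMod_pow (x : G) (n : ℕ) : dlogMod hg hd (x ^ n) = n * dlogMod hg hd x := by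
  simp only [dlogMod, map_pow, toAdd_pow, nsmul_eq_mul, map_mul, map_natCast]

theorem dlogMod_eq_zero_iff (x : G) : dlogMod hg hd x = 0 ↔ x ∈ zpowers (g ^ d) := by
  rw [mem_zpowers_iff]
  constructor
  · obtain ⟨m, rfl⟩ := mem_zpowers_iff.mp (hg x)
    rw [dlogMod_zpow, ZMod.intCast_zmod_eq_zero_iff_dvd]
    rintro ⟨k, rfl⟩
    exact ⟨k, by rw [← zpow_natCast, ← zpow_mul]⟩
  · rintro ⟨k, rfl⟩
    rw [← zpow_natCast, ← zpow_mul, dlogMod_zpow]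
    simp

theorem mem_image_mul_zpowers_pow_iff (c x : G) :
    x ∈ (· * c) '' (zpowers (g ^ d) : Set G) ↔ dlogMod hg hd x = dlogMod hg hd c := by
  rw [Set.image_mul_right, Set.mem_preimage, SetLike.mem_coe, ← dlogMod_eq_zero_iff hg hd,
    dlogMod_mul, dlogMod_inv, add_neg_eq_zero]

theorem mem_orbit_closure_of_dlogMod_eq {s : Set (Perm G)} (hs : Equiv.mulLeft (g ^ d) ∈ s)
    {x y : G} (h : dlogMod hg hd y = dlogMod hg hd x) : y ∈ orbit (closure s) x := by
  rw [← sub_eq_zero, sub_eq_add_neg, ← dlogMod_inv, ← dlogMod_mul, dlogMod_eq_zero_iff,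
    mem_zpowers_iff] at h
  obtain ⟨k, hk⟩ := h
  refine ⟨⟨Equiv.mulLeft (g ^ d) ^ k, zpow_mem (subset_closure hs) k⟩, ?_⟩
  simp [hk]

theorem dlogMod_apply_eq_one_sub {p : ℕ} (hp : (p : ZMod d) = -1) {ψ : Perm G}
    (hψ : ∀ x, ψ x = x ^ p * g) (x : G) :
    dlogMod hg hd (ψ x) = 1 - dlogMod hg hd x := by
  rw [hψ, dlogMod_mul, dlogMod_pow, hp, dlogMod_generator]
  ring

theorem orbit_closure_mulLeft_pow_eq {p : ℕ} (hp : (p : ZMod d) = -1) {ψ : Perm G}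
    (hψ : ∀ x, ψ x = x ^ p * g) (x : G) :
    orbit (closure {Equiv.mulLeft (g ^ d), ψ}) x =
      {y | dlogMod hg hd y = dlogMod hg hd x ∨ dlogMod hg hd y = 1 - dlogMod hg hd x} := by
  ext y
  constructor
  · rintro ⟨⟨σ, hσ⟩, rfl⟩
    have hpair := Perm.apply_eq_of_mem_closure
      (fun z ↦ ({dlogMod hg hd z, 1 - dlogMod hg hd z} : Set (ZMod d))) ?_ hσ x
    · exact (hpair ▸ Set.mem_insert _ _ : dlogMod hg hd (σ x) ∈ _)
    rintro τ (rfl | rfl) z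
    · rw [coe_mulLeft, dlogMod_mul, ← zpow_natCast, dlogMod_zpow, Int.cast_natCast,
        ZMod.natCast_self, zero_add]
    · rw [dlogMod_apply_eq_one_sub hg hd hp hψ, sub_sub_cancel, Set.pair_comm]
  · have hμ : Equiv.mulLeft (g ^ d) ∈ ({Equiv.mulLeft (g ^ d), ψ} : Set (Perm G)) :=
      Set.mem_insert _ _
    have hψ' : ψ ∈ ({Equiv.mulLeft (g ^ d), ψ} : Set (Perm G)) := Set.mem_insert_of_mem _ rfl
    rintro (h | h)
    · exact mem_orbit_closure_of_dlogMod_eq hg hd hμ h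
    · rw [← dlogMod_apply_eq_one_sub hg hd hp hψ] at h
      rw [← orbit_smul (⟨ψ, subset_closure hψ'⟩ : Subgroup.closure _) x]
      exact mem_orbit_closure_of_dlogMod_eq hg hd hμ h

end dlogMod

theorem four_dvd_pow_sub_one_of_odd_of_even {p r : ℕ} (hp : Odd p) (hr : Even r) :
    4 ∣ p ^ r - 1 := by
  obtain ⟨s, rfl⟩ := hr
  rw [← two_mul, pow_mul]
  calc 4 ∣ 8 := by norm_num
    _ ∣ p ^ 2 - 1 := Nat.eight_dvd_sq_sub_one_of_odd hp
    _ ∣ (p ^ 2) ^ s - 1 := by simpa only [one_pow] using Nat.sub_dvd_pow_sub_pow _ 1 s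

theorem stmt_3_general (p r : ℕ) (hp4 : p % 4 = 3) (hr : Even r)
    (F : Type*) [Field F] [Fintype F] (hcard : Fintype.card F = p ^ r)
    (ω : Fˣ) (hω : ∀ x : Fˣ, x ∈ Subgroup.zpowers ω)
    (ψ : Equiv.Perm Fˣ) (hψ : ∀ x : Fˣ, ψ x = x ^ p * ω) :
    (∀ x ∈ (Subgroup.zpowers (ω ^ 4) : Set Fˣ) ∪
        (· * ω) '' (Subgroup.zpowers (ω ^ 4) : Set Fˣ),
      MulAction.orbit (Subgroup.closure {Equiv.mulLeft (ω ^ 4), ψ}) x =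
        (Subgroup.zpowers (ω ^ 4) : Set Fˣ) ∪
          (· * ω) '' (Subgroup.zpowers (ω ^ 4) : Set Fˣ)) ∧
    ∀ x ∈ (· * ω ^ 2) '' (Subgroup.zpowers (ω ^ 4) : Set Fˣ) ∪
        (· * ω ^ 3) '' (Subgroup.zpowers (ω ^ 4) : Set Fˣ),
      MulAction.orbit (Subgroup.closure {Equiv.mulLeft (ω ^ 4), ψ}) x =
        (· * ω ^ 2) '' (Subgroup.zpowers (ω ^ 4) : Set Fˣ) ∪
          (· * ω ^ 3) '' (Subgroup.zpowers (ω ^ 4) : Set Fˣ) := by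
  classical
  have h4 : 4 ∣ Nat.card Fˣ := by
    rw [Nat.card_eq_fintype_card, Fintype.card_units, hcard]
    exact four_dvd_pow_sub_one_of_odd_of_even (Nat.odd_iff.mpr (by omega)) hr
  have hp : (p : ZMod 4) = -1 := by rw [← ZMod.natCast_mod, hp4]; rfl
  have hC0 (y : Fˣ) : y ∈ (zpowers (ω ^ 4) : Set Fˣ) ↔ dlogMod hω h4 y = 0 :=
    (dlogMod_eq_zero_iff hω h4 y).symm
  have hpow (n : ℕ) : dlogMod hω h4 (ω ^ n) = n := by
    rw [dlogMod_pow, dlogMod_generator, mul_one]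
  refine ⟨fun x hx ↦ ?_, fun x hx ↦ ?_⟩ <;> ext y <;>
    simp only [orbit_closure_mulLeft_pow_eq hω h4 hp hψ, Set.mem_union, Set.mem_ofPred_eq,
      mem_image_mul_zpowers_pow_iff hω h4, hC0, hpow, dlogMod_generator] at hx ⊢ <;>
    generalize dlogMod hω h4 x = a at hx ⊢ <;> generalize dlogMod hω h4 y = b <;> revert a b <;>
    decide

theorem stmt_3 (p r : ℕ) (hp : p.Prime) (hp4 : p % 4 = 3) (hr : Even r) (hr0 : 0 < r)
    (F : Type*) [Field F] [Fintype F] (hcard : Fintype.card F = p ^ r)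
    (ω : Fˣ) (hω : ∀ x : Fˣ, x ∈ Subgroup.zpowers ω)
    (ψ : Equiv.Perm Fˣ) (hψ : ∀ x : Fˣ, ψ x = x ^ p * ω) :
    (∀ x ∈ (Subgroup.zpowers (ω ^ 4) : Set Fˣ) ∪
        (· * ω) '' (Subgroup.zpowers (ω ^ 4) : Set Fˣ),
      MulAction.orbit (Subgroup.closure {Equiv.mulLeft (ω ^ 4), ψ}) x =
        (Subgroup.zpowers (ω ^ 4) : Set Fˣ) ∪
          (· * ω) '' (Subgroup.zpowers (ω ^ 4) : Set Fˣ)) ∧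
    ∀ x ∈ (· * ω ^ 2) '' (Subgroup.zpowers (ω ^ 4) : Set Fˣ) ∪
        (· * ω ^ 3) '' (Subgroup.zpowers (ω ^ 4) : Set Fˣ),
      MulAction.orbit (Subgroup.closure {Equiv.mulLeft (ω ^ 4), ψ}) x =
        (· * ω ^ 2) '' (Subgroup.zpowers (ω ^ 4) : Set Fˣ) ∪
          (· * ω ^ 3) '' (Subgroup.zpowers (ω ^ 4) : Set Fˣ) :=
  stmt_3_general p r hp4 hr F hcard ω hω ψ hψ
end

section
/- Let X = ℤ/nℤ ⋊ ⟨α⟩ with α an automorphism of ℤ/nℤ, acting on ℤ/nℤ by u ↦ α^i(u) + a. If Y ≤ X has exactly two orbits O_1, O_2 on ℤ/nℤ and rad(O_1) is trivial, then n is a prime power. -/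
/-!
Every element of `X`, hence of `Y`, is an affine map `u ↦ c * u + b` with `c` a unit, so for
`m ∣ n` the fibres of the reduction `O₁ → ZMod m` are permuted transitively by `Y`, and `m`
divides `|O₁|` once `O₁` meets every fibre. If it missed one, then, `O₂` being a single orbit,
`O₁` would be a union of fibres and hence invariant under translation by `m`; the trivial radical
rules this out for `m < n`. So every proper divisor of `n` divides `|O₁|`, with `0 < |O₁| < n`,
whereas a non-prime-power `n` is the product of two coprime proper divisors.
-/

open MulAction
open scoped Pointwise Finset

section OrbitFibres

variable {G α β : Type*} [Group G] [MulAction G α] {f : α → β}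

theorem sep_orbit_eq_smul_sep_orbit
    (hf : ∀ (g : G) (x x' : α), f x = f x' → f (g • x) = f (g • x')) (g : G) (x : α) :
    {z ∈ orbit G x | f z = f (g • x)} = g • {z ∈ orbit G x | f z = f x} := by
  ext z
  rw [Set.mem_smul_set_iff_inv_smul_mem]
  refine ⟨fun ⟨hz, hfz⟩ => ⟨mem_orbit_of_mem_orbit g⁻¹ hz, ?_⟩,
    fun ⟨hz, hfz⟩ => ⟨?_, ?_⟩⟩
  · simpa using hf g⁻¹ _ _ hfz
  · simpa using mem_orbit_of_mem_orbit g hz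
  · simpa using hf g _ _ hfz

theorem ncard_image_orbit_dvd [Finite α]
    (hf : ∀ (g : G) (x x' : α), f x = f x' → f (g • x) = f (g • x')) (x : α) :
    (f '' orbit G x).ncard ∣ (orbit G x).ncard := by
  classical
  have : Fintype α := Fintype.ofFinite α
  set s := (orbit G x).toFinset
  have hfibre : ∀ b ∈ s.image f, #{z ∈ s | f z = b} = #{z ∈ s | f z = f x} := by
    simp only [Finset.mem_image, s, Set.mem_toFinset]
    rintro _ ⟨_, ⟨g, rfl⟩, rfl⟩
    have := congrArg Set.ncard (sep_orbit_eq_smul_sep_orbit hf g x)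
    rw [Set.ncard_smul_set] at this
    simpa [← Set.ncard_coe_finset] using this
  have hcard : #s = #(s.image f) * #{z ∈ s | f z = f x} := by
    rw [Finset.card_eq_sum_card_image f s, Finset.sum_const_nat hfibre]
  rw [← Set.ncard_coe_finset, ← Set.ncard_coe_finset] at hcard
  simp only [s, Finset.coe_image, Set.coe_toFinset] at hcard
  exact Dvd.intro _ hcard.symm

theorem image_orbit_eq_range_or_saturated
    (hf : ∀ (g : G) (x x' : α), f x = f x' → f (g • x) = f (g • x')) {x₁ x₂ : α}
    (hcover : orbit G x₁ ∪ orbit G x₂ = Set.univ) :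
    f '' orbit G x₁ = Set.range f ∨
      ∀ z z', f z = f z' → z ∈ orbit G x₁ → z' ∈ orbit G x₁ := by
  refine or_iff_not_imp_right.mpr fun hsat => ?_
  push Not at hsat
  obtain ⟨z, z', hzz', hz, hz'⟩ := hsat
  have hz'₂ : z' ∈ orbit G x₂ := (hcover ▸ Set.mem_univ z').resolve_left hz'
  refine (Set.image_subset_range f _).antisymm ?_
  rintro _ ⟨w, rfl⟩
  rcases (hcover ▸ Set.mem_univ w : w ∈ orbit G x₁ ∪ orbit G x₂) with hw | hw
  · exact ⟨w, hw, rfl⟩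
  · obtain ⟨g, rfl⟩ : w ∈ orbit G z' := orbit_eq_iff.mpr hz'₂ ▸ hw
    exact ⟨g • z, mem_orbit_of_mem_orbit g hz, hf g z z' hzz'⟩

end OrbitFibres

theorem image_add_right_eq_self_of_saturated {A B F : Type*} [AddGroup A] [AddGroup B]
    [FunLike F A B] [AddMonoidHomClass F A B] (ρ : F) {O : Set A}
    (hsat : ∀ z z', ρ z = ρ z' → z ∈ O → z' ∈ O) {u : A} (hu : ρ u = 0) :
    (fun x => x + u) '' O = O := by
  apply Set.Subset.antisymm
  · rintro _ ⟨z, hz, rfl⟩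
    exact hsat z (z + u) (by rw [map_add, hu, add_zero]) hz
  · intro z hz
    exact ⟨z - u, hsat z _ (by rw [map_sub, hu, sub_zero]) hz, sub_add_cancel z u⟩

section Affine

variable (R : Type*) [CommRing R]

def affinePerms : Subgroup (Equiv.Perm R) where
  carrier := {σ | ∃ (c : Rˣ) (b : R), ∀ u, σ u = c * u + b}
  mul_mem' := by
    rintro σ τ ⟨c, b, hσ⟩ ⟨d, e, hτ⟩
    refine ⟨c * d, c * e + b, fun u => ?_⟩
    simp only [Equiv.Perm.mul_apply, hσ, hτ, Units.val_mul]
    ring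
  one_mem' := ⟨1, 0, fun u => by simp⟩
  inv_mem' := by
    rintro σ ⟨c, b, hσ⟩
    refine ⟨c⁻¹, -(c⁻¹ * b), fun u => σ.injective ?_⟩
    rw [Equiv.Perm.coe_inv, Equiv.apply_symm_apply, hσ]
    simp [mul_add]

variable {R}

theorem addLeft_mem_affinePerms (a : R) : Equiv.addLeft a ∈ affinePerms R :=
  ⟨1, a, fun u => by simp [add_comm]⟩

theorem map_apply_eq_of_mem_affinePerms {S : Type*} [CommRing S] (ρ : R →+* S)
    {σ : Equiv.Perm R} (hσ : σ ∈ affinePerms R) {x x' : R} (h : ρ x = ρ x') :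
    ρ (σ x) = ρ (σ x') := by
  obtain ⟨c, b, hσ⟩ := hσ
  simp only [hσ, map_add, map_mul, h]

end Affine

theorem ZMod.addAut_mem_affinePerms {n : ℕ} (α : AddAut (ZMod n)) :
    α.toEquiv ∈ affinePerms (ZMod n) := by
  refine ⟨(ZMod.AddAutEquivUnits n α).toMul, 0, fun u => ?_⟩
  conv_lhs => rw [← (ZMod.AddAutEquivUnits n).symm_apply_apply α]
  rw [add_zero]
  rfl

theorem closure_addLeft_union_le_affinePerms {n : ℕ} (α : AddAut (ZMod n)) :
    Subgroup.closure ((Set.range fun a : ZMod n => Equiv.addLeft a) ∪ {α.toEquiv}) ≤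
      affinePerms (ZMod n) := by
  rw [Subgroup.closure_le, Set.union_subset_iff, Set.range_subset_iff, Set.singleton_subset_iff]
  exact ⟨addLeft_mem_affinePerms, ZMod.addAut_mem_affinePerms α⟩

theorem Nat.isPrimePow_of_proper_divisors_dvd {n c : ℕ} (hc : 0 < c) (hcn : c < n)
    (h : ∀ m, m ∣ n → m < n → m ∣ c) : IsPrimePow n := by
  by_contra hnpp
  have hn1 : n ≠ 1 := by omega
  have hn0 : n ≠ 0 := by omega
  obtain ⟨p, hp, hpn⟩ := Nat.exists_prime_and_dvd hn1
  have hprod : ordProj[p] n * ordCompl[p] n = n := Nat.ordProj_mul_ordCompl_eq_self n p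
  have hproj : 1 < ordProj[p] n :=
    Nat.one_lt_pow (hp.factorization_pos_of_dvd hn0 hpn).ne' hp.one_lt
  have hcompl : 1 < ordCompl[p] n := by
    have h1 : ordCompl[p] n ≠ 1 := fun h1 =>
      hnpp ((exists_ordCompl_eq_one_iff_isPrimePow hn1).mpr ⟨p, hp, h1⟩)
    have h0 : ordCompl[p] n ≠ 0 := fun h0 => hn0 (by rw [← hprod, h0, mul_zero])
    exact Nat.one_lt_iff_ne_zero_and_ne_one.mpr ⟨h0, h1⟩
  have hcop : (ordProj[p] n).Coprime (ordCompl[p] n) :=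
    (Nat.coprime_ordCompl hp hn0).pow_left _
  have h₁ := h _ (Nat.ordProj_dvd n p) (by nlinarith)
  have h₂ := h _ (Nat.ordCompl_dvd n p) (by nlinarith)
  have := Nat.le_of_dvd hc (hprod ▸ hcop.mul_dvd_of_dvd_of_dvd h₁ h₂)
  omega

theorem dvd_ncard_orbit_of_dvd_of_lt {n m : ℕ} [NeZero n] {Y : Subgroup (Equiv.Perm (ZMod n))}
    (hY : Y ≤ affinePerms (ZMod n)) {a₁ a₂ : ZMod n}
    (hcover : orbit Y a₁ ∪ orbit Y a₂ = Set.univ)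
    (hrad : ∀ u : ZMod n, (fun x => x + u) '' orbit Y a₁ = orbit Y a₁ → u = 0)
    (hm : m ∣ n) (hmn : m < n) : m ∣ (orbit Y a₁).ncard := by
  set ρ := ZMod.castHom hm (ZMod m)
  have hf : ∀ (g : Y) (x x' : ZMod n), ρ x = ρ x' → ρ (g • x) = ρ (g • x') :=
    fun g _ _ h => map_apply_eq_of_mem_affinePerms ρ (hY g.2) h
  have hm0 : (m : ZMod n) ≠ 0 := by
    rw [Ne, ZMod.natCast_eq_zero_iff]
    exact fun h => hmn.not_ge (Nat.le_of_dvd (Nat.pos_of_dvd_of_pos hm (NeZero.pos n)) h)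
  have himage : ρ '' orbit Y a₁ = Set.univ := by
    rcases image_orbit_eq_range_or_saturated hf hcover with h | hsat
    · rwa [(ZMod.castHom_surjective hm).range_eq] at h
    · exact absurd (hrad m (image_add_right_eq_self_of_saturated ρ hsat
        (by rw [map_natCast, ZMod.natCast_self]))) hm0
  simpa [himage] using ncard_image_orbit_dvd hf a₁

theorem stmt_7 (n : ℕ) [NeZero n] (α : AddAut (ZMod n))
    (X : Subgroup (Equiv.Perm (ZMod n)))
    (hX : X = Subgroup.closure
      ((Set.range fun a : ZMod n => Equiv.addLeft a) ∪ {α.toEquiv}))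
    (Y : Subgroup (Equiv.Perm (ZMod n))) (hYX : Y ≤ X)
    (O₁ O₂ : Set (ZMod n))
    (hO₁ : ∃ a, O₁ = MulAction.orbit Y a) (hO₂ : ∃ a, O₂ = MulAction.orbit Y a)
    (hcover : O₁ ∪ O₂ = Set.univ) (hdisj : Disjoint O₁ O₂)
    (hrad : {u : ZMod n | (fun x => x + u) '' O₁ = O₁} = {0}) :
    IsPrimePow n := by
  obtain ⟨a₁, rfl⟩ := hO₁
  obtain ⟨a₂, rfl⟩ := hO₂
  have hY : Y ≤ affinePerms (ZMod n) := hYX.trans (hX ▸ closure_addLeft_union_le_affinePerms α)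
  have ha₂ : a₂ ∉ orbit Y a₁ := Set.disjoint_right.mp hdisj (mem_orbit_self a₂)
  have hpos : 0 < (orbit Y a₁).ncard :=
    (Set.ncard_pos (Set.toFinite _)).mpr ⟨a₁, mem_orbit_self a₁⟩
  have hlt : (orbit Y a₁).ncard < n := by
    have huniv : (Set.univ : Set (ZMod n)).ncard = n := by rw [Set.ncard_univ, Nat.card_zmod]
    have hne : orbit Y a₁ ≠ Set.univ := fun h => ha₂ (h ▸ Set.mem_univ a₂)
    exact (Set.ncard_lt_ncard (Set.ssubset_univ_iff.mpr hne)).trans_eq huniv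
  exact Nat.isPrimePow_of_proper_divisors_dvd hpos hlt fun m hm hmn =>
    dvd_ncard_orbit_of_dvd_of_lt hY hcover (fun u hu => hrad.subset hu) hm hmn
end

section
/- Let X = ℤ/nℤ ⋊ ⟨α⟩ act affinely on ℤ/nℤ, and let Y ≤ X have exactly two orbits O_1, O_2 with rad(O_1) trivial. If p is a prime divisor of n and P is the unique subgroup of order p of ℤ/nℤ, then every coset of P meets both O_1 and O_2 nontrivially. -/
/-! Every element of `X` maps cosets of `P` to cosets of `P`: translations obviously do, and `α`
fixes `P` because every subgroup of a cyclic group is invariant under all endomorphisms. Hence a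
`Y`-orbit containing one coset of `P` is a union of cosets, i.e. it is invariant under
translation by `P`. Neither orbit can be: for `O₁` this would put the nonzero element `n / p` of
`P` into `rad(O₁)`, and `O₂` is the complement of `O₁`. So no coset lies inside a single orbit. -/

open MulAction

namespace AddSubgroup

variable {G : Type*} [AddCommGroup G] (H : AddSubgroup G)

def cosetPreservingPerm : Subgroup (Equiv.Perm G) where
  carrier := {f | ∀ a b, f a - f b ∈ H ↔ a - b ∈ H}
  mul_mem' hf hg a b := (hf _ _).trans (hg a b)
  one_mem' _ _ := Iff.rfl
  inv_mem' {f} hf a b := by simpa using (hf (f⁻¹ a) (f⁻¹ b)).symm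

variable {H}

theorem addLeft_mem_cosetPreservingPerm (a : G) : Equiv.addLeft a ∈ H.cosetPreservingPerm :=
  fun x y => by simp

theorem toEquiv_mem_cosetPreservingPerm {α : AddAut G} (hα : ∀ u, α u ∈ H ↔ u ∈ H) :
    α.toEquiv ∈ H.cosetPreservingPerm :=
  fun x y => by simpa [map_sub] using hα (x - y)

theorem add_mem_orbit_of_forall_add_mem_orbit {Y : Subgroup (Equiv.Perm G)}
    (hY : Y ≤ H.cosetPreservingPerm) {x a : G} (hx : ∀ u ∈ H, x + u ∈ orbit Y a) :
    ∀ b ∈ orbit Y a, ∀ u ∈ H, b + u ∈ orbit Y a := by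
  have horbit : orbit Y x = orbit Y a := orbit_eq_iff.mpr (by simpa using hx 0 H.zero_mem)
  rw [← horbit] at hx ⊢
  rintro _ ⟨y, rfl⟩ u hu
  -- `z := y⁻¹ (y x + u)` lies in the coset of `x`, and `y z = y x + u`.
  set z := (y : Equiv.Perm G)⁻¹ (y • x + u)
  have hzx : z - x ∈ H := by
    have := hY (inv_mem y.2) (y • x + u) (y • x)
    simp_all [z, Subgroup.smul_def]
  obtain ⟨y', hy'⟩ : z ∈ orbit Y x := by simpa [z] using hx (z - x) hzx
  refine ⟨y * y', ?_⟩
  simp only [← smul_smul, hy', z, Subgroup.smul_def, Equiv.Perm.smul_def]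
  simp

theorem exists_add_notMem_orbit {Y : Subgroup (Equiv.Perm G)} (hY : Y ≤ H.cosetPreservingPerm)
    {a : G} (hO : ¬ ∀ b ∈ orbit Y a, ∀ u ∈ H, b + u ∈ orbit Y a) (x : G) :
    ∃ u ∈ H, x + u ∉ orbit Y a := by
  by_contra! hx
  exact hO (add_mem_orbit_of_forall_add_mem_orbit hY hx)

theorem forall_add_mem_compl {O : Set G} (hO : ∀ b ∈ O, ∀ u ∈ H, b + u ∈ O) :
    ∀ b ∈ Oᶜ, ∀ u ∈ H, b + u ∈ Oᶜ := fun b hb u hu hbu =>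
  hb (by simpa using hO _ hbu (-u) (H.neg_mem hu))

theorem image_add_right_eq_of_forall_add_mem {O : Set G} (hO : ∀ b ∈ O, ∀ u ∈ H, b + u ∈ O)
    {u : G} (hu : u ∈ H) :
    (fun x => x + u) '' O = O := by
  refine (Set.image_subset_iff.mpr fun b hb => hO b hb u hu).antisymm fun b hb => ?_
  exact ⟨b + -u, hO b hb (-u) (H.neg_mem hu), by simp⟩

end AddSubgroup

namespace ZMod

theorem map_mem_addSubgroup {n : ℕ} (f : ZMod n →+ ZMod n) {H : AddSubgroup (ZMod n)}
    {x : ZMod n} (hx : x ∈ H) : f x ∈ H := by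
  have hfx : f x = (cast (f 1) : ℤ) • x := by
    obtain ⟨k, rfl⟩ := intCast_surjective x
    rw [← zsmul_one (R := ZMod n) k, map_zsmul, zsmul_one, zsmul_eq_mul, zsmul_eq_mul,
      intCast_zmod_cast, mul_comm]
  exact hfx ▸ H.zsmul_mem hx _

theorem addAut_apply_mem_addSubgroup_iff {n : ℕ} (α : AddAut (ZMod n))
    {H : AddSubgroup (ZMod n)} {u : ZMod n} : α u ∈ H ↔ u ∈ H :=
  ⟨fun h => by simpa using map_mem_addSubgroup (α.symm : ZMod n →+ ZMod n) h,
    map_mem_addSubgroup (α : ZMod n →+ ZMod n)⟩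

theorem natCast_div_ne_zero {n p : ℕ} [NeZero n] (hp : 1 < p) (hpn : p ∣ n) :
    ((n / p : ℕ) : ZMod n) ≠ 0 := by
  have hn : 0 < n := Nat.pos_of_neZero n
  rw [Ne, natCast_eq_zero_iff]
  exact fun h => (Nat.div_lt_self hn hp).not_ge
    (Nat.le_of_dvd (Nat.div_pos (Nat.le_of_dvd hn hpn) (by omega)) h)

end ZMod

theorem stmt_8 (n : ℕ) [NeZero n] (α : AddAut (ZMod n))
    (X : Subgroup (Equiv.Perm (ZMod n)))
    (hX : X = Subgroup.closure
      ((Set.range fun a : ZMod n => Equiv.addLeft a) ∪ {α.toEquiv}))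
    (Y : Subgroup (Equiv.Perm (ZMod n))) (hYX : Y ≤ X)
    (O₁ O₂ : Set (ZMod n))
    (hO₁ : ∃ a, O₁ = MulAction.orbit Y a) (hO₂ : ∃ a, O₂ = MulAction.orbit Y a)
    (hcover : O₁ ∪ O₂ = Set.univ) (hdisj : Disjoint O₁ O₂)
    (hrad : {u : ZMod n | (fun x => x + u) '' O₁ = O₁} = {0})
    (p : ℕ) (hp : p.Prime) (hpn : p ∣ n)
    (P : AddSubgroup (ZMod n)) (hP : P = AddSubgroup.zmultiples ((n / p : ℕ) : ZMod n)) :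
    ∀ x : ZMod n,
      ((fun u => x + u) '' (P : Set (ZMod n)) ∩ O₁).Nonempty ∧
        ((fun u => x + u) '' (P : Set (ZMod n)) ∩ O₂).Nonempty := by
  have hY : Y ≤ P.cosetPreservingPerm := hYX.trans <| hX ▸ (Subgroup.closure_le _).mpr <|
    Set.union_subset (Set.range_subset_iff.mpr AddSubgroup.addLeft_mem_cosetPreservingPerm)
      (Set.singleton_subset_iff.mpr (AddSubgroup.toEquiv_mem_cosetPreservingPerm
        fun _ => ZMod.addAut_apply_mem_addSubgroup_iff α))
  have hO₁O₂ : O₁ᶜ = O₂ := IsCompl.compl_eq ⟨hdisj, codisjoint_iff.mpr hcover⟩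
  have hO₁_not_inv : ¬ ∀ b ∈ O₁, ∀ u ∈ P, b + u ∈ O₁ := fun h => by
    have hgP : ((n / p : ℕ) : ZMod n) ∈ P := hP ▸ AddSubgroup.mem_zmultiples _
    have hg : ((n / p : ℕ) : ZMod n) ∈ ({0} : Set (ZMod n)) :=
      hrad ▸ AddSubgroup.image_add_right_eq_of_forall_add_mem h hgP
    exact ZMod.natCast_div_ne_zero hp.one_lt hpn hg
  have hO₂_not_inv : ¬ ∀ b ∈ O₂, ∀ u ∈ P, b + u ∈ O₂ := fun h =>
    hO₁_not_inv (by simpa [← hO₁O₂] using AddSubgroup.forall_add_mem_compl h)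
  obtain ⟨a₁, rfl⟩ := hO₁
  obtain ⟨a₂, rfl⟩ := hO₂
  intro x
  obtain ⟨u₁, hu₁, hx₁⟩ := AddSubgroup.exists_add_notMem_orbit hY hO₂_not_inv x
  obtain ⟨u₂, hu₂, hx₂⟩ := AddSubgroup.exists_add_notMem_orbit hY hO₁_not_inv x
  exact ⟨⟨x + u₁, ⟨u₁, hu₁, rfl⟩, by simpa [← hO₁O₂] using hx₁⟩,
    ⟨x + u₂, ⟨u₂, hu₂, rfl⟩, hO₁O₂ ▸ hx₂⟩⟩
end

section
/- Let X = ℤ/nℤ ⋊ ⟨α⟩ act affinely on ℤ/nℤ, and let Y ≤ X have exactly two orbits O_1, O_2 on ℤ/nℤ with rad(O_1) trivial. Then for every prime p dividing n, n/p divides both |O_1| and |O_2|. -/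
/-!
Let `m = n / p` and `π : ℤ/nℤ → ℤ/mℤ` the reduction. Affine maps `x ↦ u x + b` permute the fibres
of `π`, so every `g ∈ Y` does. Hence the images `π(O₁)`, `π(O₂)` are orbits of the induced action:
either they coincide, and then both are all of `ℤ/mℤ` and each `O_i` meets every fibre in the same
number of points, so `m ∣ |O_i|`; or they are disjoint, and then `O₁ = π⁻¹(π(O₁))` is invariant
under translation by `m ≠ 0`, contradicting `rad(O₁) = 0`.
-/

open MulAction Set Finset

namespace MulAction

variable {G α β : Type*} [Group G] [MulAction G α] {f : α → β}

theorem image_orbit_eq_of_apply_eq (hf : ∀ (g : G) x y, f x = f y → f (g • x) = f (g • y))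
    {x y : α} (h : f x = f y) : f '' orbit G x = f '' orbit G y := by
  have key : ∀ x y : α, f x = f y → f '' orbit G x ⊆ f '' orbit G y := by
    rintro x y h _ ⟨_, ⟨g, rfl⟩, rfl⟩
    exact ⟨g • y, mem_orbit y g, (hf g x y h).symm⟩
  exact (key x y h).antisymm (key y x h.symm)

theorem image_orbit_eq_of_not_disjoint (hf : ∀ (g : G) x y, f x = f y → f (g • x) = f (g • y))
    {x y : α} (h : ¬ Disjoint (f '' orbit G x) (f '' orbit G y)) :
    f '' orbit G x = f '' orbit G y := by
  obtain ⟨_, ⟨_, ⟨g, rfl⟩, rfl⟩, ⟨_, ⟨g', rfl⟩, hg'⟩⟩ := not_disjoint_iff.mp h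
  rw [← orbit_smul g x, ← orbit_smul g' y]
  exact image_orbit_eq_of_apply_eq hf hg'.symm

theorem ncard_orbit_inter_fiber_le [Finite α]
    (hf : ∀ (g : G) x y, f x = f y → f (g • x) = f (g • y)) (x : α) (g : G) :
    (orbit G x ∩ f ⁻¹' {f x}).ncard ≤ (orbit G x ∩ f ⁻¹' {f (g • x)}).ncard :=
  ncard_le_ncard_of_injOn (g • ·) (fun _ ⟨hy, hfy⟩ => ⟨mapsTo_smul_orbit g x hy, hf g _ x hfy⟩)
    (MulAction.injective g).injOn (toFinite _)

theorem ncard_orbit_inter_fiber_eq [Finite α]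
    (hf : ∀ (g : G) x y, f x = f y → f (g • x) = f (g • y)) {x y : α} (hy : y ∈ orbit G x) :
    (orbit G x ∩ f ⁻¹' {f y}).ncard = (orbit G x ∩ f ⁻¹' {f x}).ncard := by
  obtain ⟨g, rfl⟩ := hy
  refine le_antisymm ?_ (ncard_orbit_inter_fiber_le hf x g)
  simpa [orbit_smul] using ncard_orbit_inter_fiber_le hf (g • x) g⁻¹

theorem ncard_image_orbit_mul_ncard_fiber [Finite α]
    (hf : ∀ (g : G) x y, f x = f y → f (g • x) = f (g • y)) (x : α) :
    (f '' orbit G x).ncard * (orbit G x ∩ f ⁻¹' {f x}).ncard = (orbit G x).ncard := by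
  classical
  set s := (toFinite (orbit G x)).toFinset
  have hs : orbit G x = s := (Finite.coe_toFinset _).symm
  have hfiber : ∀ b ∈ s.image f, #{a ∈ s | f a = b} = (orbit G x ∩ f ⁻¹' {f x}).ncard := by
    intro b hb
    obtain ⟨y, hy, rfl⟩ := Finset.mem_image.mp hb
    rw [← ncard_orbit_inter_fiber_eq hf (hs ▸ hy : y ∈ orbit G x), hs, ← ncard_coe_finset, Finset.coe_filter]
    rfl
  rw [hs, ← Finset.coe_image, ncard_coe_finset, ncard_coe_finset, Finset.card_eq_sum_card_image f s,
    Finset.sum_congr rfl hfiber, Finset.sum_const, smul_eq_mul, hs]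

end MulAction

namespace Equiv.Perm

/-- Permutations mapping fibres of `f` onto fibres of `f` (not necessarily the same ones). -/
def fiberStabilizer {α β : Type*} (f : α → β) : Subgroup (Perm α) where
  carrier := {g | ∀ x y, f (g x) = f (g y) ↔ f x = f y}
  mul_mem' hg hh x y := (hg _ _).trans (hh x y)
  one_mem' _ _ := Iff.rfl
  inv_mem' {g} hg x y := by simpa using (hg (g⁻¹ x) (g⁻¹ y)).symm

theorem addLeft_mem_fiberStabilizer {A B F : Type*} [AddGroup A] [AddGroup B] [FunLike F A B]
    [AddMonoidHomClass F A B] (π : F) (a : A) : Equiv.addLeft a ∈ fiberStabilizer π := by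
  intro x y
  simp [map_add]

end Equiv.Perm

namespace ZMod

variable {n m : ℕ} (hm : m ∣ n)

theorem castHom_map_eq_of_eq (β : ZMod n →+ ZMod n) {x y : ZMod n}
    (h : castHom hm (ZMod m) x = castHom hm (ZMod m) y) :
    castHom hm (ZMod m) (β x) = castHom hm (ZMod m) (β y) := by
  have hβ : ∀ z : ZMod n, β z = β 1 * z := fun z => by
    rw [mul_comm, ← z.intCast_zmod_cast, ← zsmul_eq_mul, ← map_zsmul, zsmul_one]
  rw [hβ x, hβ y, map_mul, map_mul, h]

theorem addAut_mem_fiberStabilizer_castHom (σ : AddAut (ZMod n)) :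
    σ.toEquiv ∈ Equiv.Perm.fiberStabilizer (castHom hm (ZMod m)) := fun x y =>
  ⟨fun h => by simpa using castHom_map_eq_of_eq hm σ.symm.toAddMonoidHom h,
    castHom_map_eq_of_eq hm σ.toAddMonoidHom⟩

theorem image_add_natCast_preimage_castHom (S : Set (ZMod m)) :
    (· + (m : ZMod n)) '' (castHom hm (ZMod m) ⁻¹' S) = castHom hm (ZMod m) ⁻¹' S := by
  ext x
  simp [Set.image_add_right, map_add, map_neg]

end ZMod

open Equiv.Perm

theorem ZMod.dvd_ncard_orbits_of_union_eq_univ {n m : ℕ} [NeZero n] (hm : m ∣ n)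
    (hm₀ : (m : ZMod n) ≠ 0) {Y : Subgroup (Equiv.Perm (ZMod n))}
    (hY : Y ≤ fiberStabilizer (castHom hm (ZMod m))) {a₁ a₂ : ZMod n}
    (hcover : orbit Y a₁ ∪ orbit Y a₂ = univ)
    (hrad : ∀ u : ZMod n, (· + u) '' orbit Y a₁ = orbit Y a₁ → u = 0) :
    m ∣ (orbit Y a₁).ncard ∧ m ∣ (orbit Y a₂).ncard := by
  set π := castHom hm (ZMod m)
  have hf : ∀ (g : Y) x y, π x = π y → π (g • x) = π (g • y) := fun g x y => (hY g.2 x y).2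
  have hdvd : ∀ a, π '' orbit Y a = univ → m ∣ (orbit Y a).ncard := fun a ha => by
    have := ncard_image_orbit_mul_ncard_fiber hf a
    rw [ha, ncard_univ, Nat.card_zmod] at this
    exact Dvd.intro _ this
  by_cases hdisj : Disjoint (π '' orbit Y a₁) (π '' orbit Y a₂)
  · -- `O₁` is a union of fibres of `π`, hence invariant under translation by `m`.
    have hsat : π ⁻¹' (π '' orbit Y a₁) = orbit Y a₁ := by
      refine (subset_preimage_image _ _).antisymm' fun x hx => ?_
      rcases (hcover ▸ mem_univ x : x ∈ orbit Y a₁ ∪ orbit Y a₂) with h | h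
      · exact h
      · exact absurd (mem_image_of_mem π h) (hdisj.notMem_of_mem_left hx)
    exact absurd (hrad _ (hsat ▸ image_add_natCast_preimage_castHom hm _)) hm₀
  · have h12 := image_orbit_eq_of_not_disjoint hf hdisj
    have huniv : π '' orbit Y a₁ = univ := by
      have := image_union π (orbit Y a₁) (orbit Y a₂)
      rwa [hcover, image_univ, (ringHom_surjective π).range_eq, ← h12, union_self, eq_comm] at this
    exact ⟨hdvd a₁ huniv, hdvd a₂ (h12 ▸ huniv)⟩

theorem stmt_9_general (n : ℕ) [NeZero n] (α : AddAut (ZMod n))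
    (X : Subgroup (Equiv.Perm (ZMod n)))
    (hX : X = Subgroup.closure
      ((Set.range fun a : ZMod n => Equiv.addLeft a) ∪ {α.toEquiv}))
    (Y : Subgroup (Equiv.Perm (ZMod n))) (hYX : Y ≤ X)
    (O₁ O₂ : Set (ZMod n))
    (hO₁ : ∃ a, O₁ = MulAction.orbit Y a) (hO₂ : ∃ a, O₂ = MulAction.orbit Y a)
    (hcover : O₁ ∪ O₂ = Set.univ)
    (hrad : {u : ZMod n | (fun x => x + u) '' O₁ = O₁} = {0}) :
    ∀ p : ℕ, p.Prime → p ∣ n → n / p ∣ O₁.ncard ∧ n / p ∣ O₂.ncard := by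
  intro p hp hpn
  obtain ⟨a₁, rfl⟩ := hO₁
  obtain ⟨a₂, rfl⟩ := hO₂
  have hm : n / p ∣ n := Nat.div_dvd_of_dvd hpn
  have hm₀ : ((n / p : ℕ) : ZMod n) ≠ 0 := by
    rw [Ne, ZMod.natCast_eq_zero_iff]
    intro h
    exact (Nat.div_pos (Nat.le_of_dvd (NeZero.pos n) hpn) hp.pos).ne'
      (Nat.eq_zero_of_dvd_of_lt h (Nat.div_lt_self (NeZero.pos n) hp.one_lt))
  have hY : Y ≤ fiberStabilizer (ZMod.castHom hm (ZMod (n / p))) :=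
    hYX.trans <| hX ▸ (Subgroup.closure_le _).2 <| union_subset
      (range_subset_iff.2 (addLeft_mem_fiberStabilizer _))
      (singleton_subset_iff.2 (ZMod.addAut_mem_fiberStabilizer_castHom hm α))
  exact ZMod.dvd_ncard_orbits_of_union_eq_univ hm hm₀ hY hcover fun u hu =>
    (hrad ▸ hu : u ∈ ({0} : Set (ZMod n)))

theorem stmt_9 (n : ℕ) [NeZero n] (α : AddAut (ZMod n))
    (X : Subgroup (Equiv.Perm (ZMod n)))
    (hX : X = Subgroup.closure
      ((Set.range fun a : ZMod n => Equiv.addLeft a) ∪ {α.toEquiv}))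
    (Y : Subgroup (Equiv.Perm (ZMod n))) (hYX : Y ≤ X)
    (O₁ O₂ : Set (ZMod n))
    (hO₁ : ∃ a, O₁ = MulAction.orbit Y a) (hO₂ : ∃ a, O₂ = MulAction.orbit Y a)
    (hcover : O₁ ∪ O₂ = Set.univ) (hdisj : Disjoint O₁ O₂)
    (hrad : {u : ZMod n | (fun x => x + u) '' O₁ = O₁} = {0}) :
    ∀ p : ℕ, p.Prime → p ∣ n → n / p ∣ O₁.ncard ∧ n / p ∣ O₂.ncard :=
  stmt_9_general n α X hX Y hYX O₁ O₂ hO₁ hO₂ hcover hrad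
end

section
/- Let Y ≤ ℤ/nℤ ⋊ ⟨α⟩ have exactly two orbits O_1, O_2 on ℤ/nℤ with rad(O_1) trivial. Then Y ∩ ℤ/nℤ (the translation part of Y) is trivial, and hence Y embeds into ⟨α⟩; in particular |Y| < n. -/
/-!
Every element of the group generated by the translations and `α` is affine, `x ↦ a + β x` with
`β ∈ ⟨α⟩`, and `y ↦ β` is a homomorphism whose kernel is the translation subgroup. A translation
by `u` lying in `Y` maps the `Y`-orbit `O₁` onto itself, so `u ∈ rad(O₁) = {0}`. Hence the linear
part embeds `Y` into `⟨α⟩ ≤ Aut(ℤ/nℤ) ≅ (ℤ/nℤ)ˣ`, and `|Y| ≤ φ(n) < n` since two orbits force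
`n > 1`.
-/

open Equiv MulAction

namespace Equiv.Perm

variable {G : Type*} [AddGroup G]

theorem addLeft_mul_toEquiv_mul (a b : G) (β γ : AddAut G) :
    Equiv.addLeft a * β.toEquiv * (Equiv.addLeft b * γ.toEquiv) =
      Equiv.addLeft (a + β b) * (β + γ).toEquiv := by
  ext x; simp [add_assoc]

theorem inv_addLeft_mul_toEquiv (a : G) (β : AddAut G) :
    (Equiv.addLeft a * β.toEquiv)⁻¹ = Equiv.addLeft ((-β) (-a)) * (-β).toEquiv := by
  ext x; simp [map_add]

def linearPart (y : Perm G) : Perm G := (Equiv.addLeft (y 0))⁻¹ * y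

theorem linearPart_addLeft_mul (a : G) (β : AddAut G) :
    linearPart (Equiv.addLeft a * β.toEquiv) = β.toEquiv := by
  ext x; simp [linearPart]

theorem linearPart_eq_one_iff {y : Perm G} : linearPart y = 1 ↔ y = Equiv.addLeft (y 0) := by
  rw [linearPart, inv_mul_eq_one, eq_comm]

def affineSubgroup (K : Subgroup (Perm G)) : Subgroup (Perm G) where
  carrier := {y | ∃ (a : G) (β : AddAut G), β.toEquiv ∈ K ∧ y = Equiv.addLeft a * β.toEquiv}
  one_mem' := ⟨0, 0, K.one_mem, by ext; simp⟩
  mul_mem' := by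
    rintro _ _ ⟨a, β, hβ, rfl⟩ ⟨b, γ, hγ, rfl⟩
    exact ⟨a + β b, β + γ, K.mul_mem hβ hγ, addLeft_mul_toEquiv_mul a b β γ⟩
  inv_mem' := by
    rintro _ ⟨a, β, hβ, rfl⟩
    exact ⟨(-β) (-a), -β, K.inv_mem hβ, inv_addLeft_mul_toEquiv a β⟩

theorem linearPart_mem {K : Subgroup (Perm G)} {y : Perm G} (hy : y ∈ affineSubgroup K) :
    linearPart y ∈ K := by
  obtain ⟨a, β, hβ, rfl⟩ := hy
  rwa [linearPart_addLeft_mul]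

def linearPartHom (K : Subgroup (Perm G)) : affineSubgroup K →* K where
  toFun y := ⟨linearPart y, linearPart_mem y.2⟩
  map_one' := by ext; simp [linearPart]
  map_mul' y z := by
    obtain ⟨a, β, -, hy⟩ := y.2
    obtain ⟨b, γ, -, hz⟩ := z.2
    ext1
    change linearPart (y * z : Perm G) = linearPart y * linearPart z
    rw [hy, hz, addLeft_mul_toEquiv_mul, linearPart_addLeft_mul, linearPart_addLeft_mul,
      linearPart_addLeft_mul]
    rfl

theorem closure_le_affineSubgroup (α : AddAut G) :
    Subgroup.closure ((Set.range fun a : G => Equiv.addLeft a) ∪ {α.toEquiv}) ≤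
      affineSubgroup (Subgroup.zpowers α.toEquiv) := by
  rw [Subgroup.closure_le]
  rintro _ (⟨a, rfl⟩ | rfl)
  · exact ⟨a, 0, one_mem _, by ext; simp⟩
  · exact ⟨0, α, Subgroup.mem_zpowers _, by ext; simp⟩

theorem injective_linearPartHom_comp_inclusion {K Y : Subgroup (Perm G)}
    (hY : Y ≤ affineSubgroup K) (htrans : ∀ a : G, Equiv.addLeft a ∈ Y → a = 0) :
    Function.Injective ((linearPartHom K).comp (Subgroup.inclusion hY)) := by
  rw [injective_iff_map_eq_one]
  intro y hy
  have hy_transl : (y : Perm G) = Equiv.addLeft ((y : Perm G) 0) :=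
    linearPart_eq_one_iff.mp (congrArg Subtype.val hy)
  have hy0 : (y : Perm G) 0 = 0 := htrans _ (hy_transl ▸ y.2)
  ext1
  rw [hy_transl, hy0, Equiv.addLeft_zero]
  rfl

end Equiv.Perm

theorem MulAction.image_add_right_orbit_eq {G : Type*} [AddCommGroup G]
    {Y : Subgroup (Perm G)} {a : G} (ha : Equiv.addLeft a ∈ Y) (p : G) :
    (fun x => x + a) '' orbit Y p = orbit Y p := by
  have h := smul_orbit (⟨_, ha⟩ : Y) p
  rw [← Set.image_smul] at h
  convert h using 2 with x
  exact add_comm x a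

theorem ZMod.card_zpowers_toEquiv_le_totient {n : ℕ} [NeZero n] (α : AddAut (ZMod n)) :
    Nat.card (Subgroup.zpowers α.toEquiv) ≤ n.totient := by
  have horder : orderOf α.toEquiv = addOrderOf α := by
    rw [← addOrderOf_ofMul_eq_orderOf]
    exact addOrderOf_injective (AddAut.toPerm (ZMod n)) AddEquiv.toEquiv_injective α
  calc Nat.card (Subgroup.zpowers α.toEquiv) = addOrderOf α := by rw [Nat.card_zpowers, horder]
    _ ≤ Nat.card (AddAut (ZMod n)) := addOrderOf_le_card
    _ = Nat.card (ZMod n)ˣ :=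
      Nat.card_congr ((ZMod.AddAutEquivUnits n).toEquiv.trans Additive.toMul)
    _ = n.totient := by rw [Nat.card_eq_fintype_card, ZMod.card_units_eq_totient]

theorem stmt_10_general (n : ℕ) [NeZero n] (α : AddAut (ZMod n))
    (X : Subgroup (Equiv.Perm (ZMod n)))
    (hX : X = Subgroup.closure
      ((Set.range fun a : ZMod n => Equiv.addLeft a) ∪ {α.toEquiv}))
    (Y : Subgroup (Equiv.Perm (ZMod n))) (hYX : Y ≤ X)
    (O₁ O₂ : Set (ZMod n))
    (hO₁ : ∃ a, O₁ = MulAction.orbit Y a) (hO₂ : ∃ a, O₂ = MulAction.orbit Y a)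
    (hdisj : Disjoint O₁ O₂)
    (hrad : {u : ZMod n | (fun x => x + u) '' O₁ = O₁} = {0}) :
    (∀ a : ZMod n, Equiv.addLeft a ∈ Y → a = 0) ∧
      (∃ f : Y →* Subgroup.zpowers α.toEquiv, Function.Injective f) ∧
        Nat.card Y < n := by
  obtain ⟨p₁, rfl⟩ := hO₁
  obtain ⟨p₂, rfl⟩ := hO₂
  have htrans (a : ZMod n) (ha : Equiv.addLeft a ∈ Y) : a = 0 :=
    hrad.subset (image_add_right_orbit_eq ha p₁)
  have hY : Y ≤ Perm.affineSubgroup (Subgroup.zpowers α.toEquiv) :=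
    hYX.trans (hX ▸ Perm.closure_le_affineSubgroup α)
  have hinj := Perm.injective_linearPartHom_comp_inclusion hY htrans
  have hn : 1 < n := by
    have : Nontrivial (ZMod n) :=
      ⟨⟨p₁, p₂, hdisj.ne_of_mem (mem_orbit_self p₁) (mem_orbit_self p₂)⟩⟩
    exact Nat.one_lt_iff_ne_zero_and_ne_one.mpr ⟨NeZero.ne n, ZMod.nontrivial_iff.mp this⟩
  refine ⟨htrans, ⟨_, hinj⟩, ?_⟩
  calc Nat.card Y ≤ Nat.card (Subgroup.zpowers α.toEquiv) :=
        Nat.card_le_card_of_injective _ hinj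
    _ ≤ n.totient := ZMod.card_zpowers_toEquiv_le_totient α
    _ < n := Nat.totient_lt n hn

theorem stmt_10 (n : ℕ) [NeZero n] (α : AddAut (ZMod n))
    (X : Subgroup (Equiv.Perm (ZMod n)))
    (hX : X = Subgroup.closure
      ((Set.range fun a : ZMod n => Equiv.addLeft a) ∪ {α.toEquiv}))
    (Y : Subgroup (Equiv.Perm (ZMod n))) (hYX : Y ≤ X)
    (O₁ O₂ : Set (ZMod n))
    (hO₁ : ∃ a, O₁ = MulAction.orbit Y a) (hO₂ : ∃ a, O₂ = MulAction.orbit Y a)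
    (hcover : O₁ ∪ O₂ = Set.univ) (hdisj : Disjoint O₁ O₂)
    (hrad : {u : ZMod n | (fun x => x + u) '' O₁ = O₁} = {0}) :
    (∀ a : ZMod n, Equiv.addLeft a ∈ Y → a = 0) ∧
      (∃ f : Y →* Subgroup.zpowers α.toEquiv, Function.Injective f) ∧
        Nat.card Y < n :=
  stmt_10_general n α X hX Y hYX O₁ O₂ hO₁ hO₂ hdisj hrad
end

section
/- A non-identity element of the holomorph of ℤ/nℤ (with n = p^t) whose order is coprime to p has exactly one fixed point in its action on ℤ/nℤ. -/
/-! Every element of the holomorph acts as `x ↦ c * x + a`. If `c - 1` is a unit this affine map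
has exactly one fixed point. Otherwise `p ∣ c - 1`, so `c ^ p ^ t = 1`; together with
`c ^ orderOf g = 1` and `orderOf g` prime to `p` this forces `c = 1`. Then `g` is a translation,
its order divides `p ^ t`, and hence `g = 1`. -/

theorem Equiv.Perm.exists_addAut_add_of_mem_closure {A : Type*} [AddCommGroup A]
    {f : Equiv.Perm A}
    (hf : f ∈ Subgroup.closure ((Set.range fun a : A => Equiv.addLeft a) ∪
      Set.range fun β : AddAut A => β.toEquiv)) :
    ∃ (β : AddAut A) (a : A), ∀ x, f x = β x + a := by
  -- `AddAut A` is written additively: `+` is composition and `0` is the identity.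
  induction hf using Subgroup.closure_induction with
  | mem f hf =>
    rcases hf with ⟨a, rfl⟩ | ⟨β, rfl⟩
    · exact ⟨0, a, fun x => add_comm a x⟩
    · exact ⟨β, 0, fun x => (add_zero _).symm⟩
  | one => exact ⟨0, 0, fun x => (add_zero x).symm⟩
  | mul f₁ f₂ _ _ ih₁ ih₂ =>
    obtain ⟨β, a, h₁⟩ := ih₁
    obtain ⟨γ, b, h₂⟩ := ih₂
    exact ⟨β + γ, β b + a, fun x => by
      rw [Equiv.Perm.mul_apply, h₂, h₁, map_add, AddAut.add_apply, add_assoc]⟩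
  | inv f _ ih =>
    obtain ⟨β, a, h⟩ := ih
    refine ⟨-β, -(-β) a, fun x => f.injective ?_⟩
    rw [Equiv.Perm.coe_inv, Equiv.apply_symm_apply, h, map_add, map_neg]
    simp

theorem ZMod.addAut_apply_eq_mul {n : ℕ} (β : AddAut (ZMod n)) (x : ZMod n) :
    β x = β 1 * x := by
  rw [mul_comm, ← x.intCast_zmod_cast, ← zsmul_eq_mul, ← map_zsmul, zsmul_one]

theorem Equiv.Perm.pow_apply_eq_add_nsmul {A : Type*} [AddMonoid A] {g : Equiv.Perm A} {a : A}
    (hg : ∀ x, g x = x + a) (k : ℕ) (x : A) : (g ^ k) x = x + k • a := by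
  induction k with
  | zero => simp
  | succ k ih => rw [pow_succ', Equiv.Perm.mul_apply, ih, hg, succ_nsmul, add_assoc]

theorem ZMod.perm_pow_eq_one_of_apply_eq_add {n : ℕ} {g : Equiv.Perm (ZMod n)} {a : ZMod n}
    (hg : ∀ x, g x = x + a) : g ^ n = 1 := by
  ext x
  simp [Equiv.Perm.pow_apply_eq_add_nsmul hg]

theorem Equiv.Perm.pow_apply_one_sub_pow_apply_zero {R : Type*} [CommRing R] {g : Equiv.Perm R}
    {c a : R} (hg : ∀ x, g x = c * x + a) (k : ℕ) : (g ^ k) 1 - (g ^ k) 0 = c ^ k := by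
  induction k with
  | zero => simp
  | succ k ih =>
    rw [pow_succ', Equiv.Perm.mul_apply, Equiv.Perm.mul_apply, hg, hg, pow_succ', ← ih]
    ring

theorem Equiv.Perm.pow_eq_one_of_apply_eq_mul_add {R : Type*} [CommRing R] {g : Equiv.Perm R}
    {c a : R} (hg : ∀ x, g x = c * x + a) {k : ℕ} (hk : g ^ k = 1) : c ^ k = 1 := by
  simpa [hk] using (pow_apply_one_sub_pow_apply_zero hg k).symm

theorem ZMod.eq_one_of_pow_eq_one_of_natCast_dvd_sub_one {p t m : ℕ} {c : ZMod (p ^ t)}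
    (hc : c ^ m = 1) (hm : m.Coprime p) (hdvd : (p : ZMod (p ^ t)) ∣ c - 1) : c = 1 := by
  have hpow : c ^ p ^ t = 1 := by
    have h := dvd_sub_pow_of_dvd_sub hdvd t
    rwa [one_pow, pow_succ, ← Nat.cast_pow, ZMod.natCast_self, zero_mul, zero_dvd_iff,
      sub_eq_zero] at h
  simpa [(hm.pow_right t).gcd_eq_one] using pow_gcd_eq_one.mpr ⟨hc, hpow⟩

theorem ZMod.isUnit_or_natCast_dvd {p : ℕ} (hp : p.Prime) (t : ℕ) (x : ZMod (p ^ t)) :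
    IsUnit x ∨ (p : ZMod (p ^ t)) ∣ x := by
  have : NeZero (p ^ t) := ⟨pow_ne_zero t hp.ne_zero⟩
  rw [← x.natCast_zmod_val, ZMod.isUnit_iff_coprime]
  rcases Nat.coprime_or_dvd_of_prime hp x.val with hcop | hdvd
  · exact .inl (hcop.symm.pow_right t)
  · exact .inr (Nat.cast_dvd_cast hdvd)

theorem existsUnique_mul_add_eq_self {R : Type*} [CommRing R] {c : R} (a : R)
    (hc : IsUnit (c - 1)) : ∃! x, c * x + a = x := by
  obtain ⟨u, hu⟩ := hc
  have key : ∀ x, c * x + a = x ↔ x = ↑u⁻¹ * -a := fun x => by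
    rw [Units.eq_inv_mul_iff_mul_eq, hu]
    constructor <;> intro h <;> linear_combination h
  exact ⟨_, (key _).mpr rfl, fun y hy => (key y).mp hy⟩

theorem stmt_14_general (n p t : ℕ) (hp : p.Prime) (hn : n = p ^ t)
    (g : Equiv.Perm (ZMod n))
    (hg : g ∈ Subgroup.closure ((Set.range fun a : ZMod n => Equiv.addLeft a) ∪
      Set.range fun β : AddAut (ZMod n) => β.toEquiv))
    (hg1 : g ≠ 1) (hord : (orderOf g).Coprime p) :
    ∃! x : ZMod n, g x = x := by
  subst hn
  obtain ⟨β, a, hβa⟩ := Equiv.Perm.exists_addAut_add_of_mem_closure hg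
  have hgx : ∀ x, g x = β 1 * x + a := fun x => by rw [hβa, ZMod.addAut_apply_eq_mul]
  rcases ZMod.isUnit_or_natCast_dvd hp t (β 1 - 1) with hunit | hdvd
  · simpa only [hgx] using existsUnique_mul_add_eq_self a hunit
  · have hslope : β 1 = 1 := ZMod.eq_one_of_pow_eq_one_of_natCast_dvd_sub_one
      (Equiv.Perm.pow_eq_one_of_apply_eq_mul_add hgx (pow_orderOf_eq_one g)) hord hdvd
    have htrans : g ^ p ^ t = 1 :=
      ZMod.perm_pow_eq_one_of_apply_eq_add fun x => by rw [hgx, hslope, one_mul]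
    exact absurd (orderOf_eq_one_iff.mp
      ((hord.pow_right t).eq_one_of_dvd (orderOf_dvd_of_pow_eq_one htrans))) hg1

theorem stmt_14 (n p t : ℕ) (hp : p.Prime) (ht : 1 ≤ t) (hn : n = p ^ t)
    (g : Equiv.Perm (ZMod n))
    (hg : g ∈ Subgroup.closure ((Set.range fun a : ZMod n => Equiv.addLeft a) ∪
      Set.range fun β : AddAut (ZMod n) => β.toEquiv))
    (hg1 : g ≠ 1) (hord : (orderOf g).Coprime p) :
    ∃! x : ZMod n, g x = x :=
  stmt_14_general n p t hp hn g hg hg1 hord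
end

section
/- Let q = p^r and let C ≤ F_q^* be the subgroup of index 4 (so 4 | q−1), with ω a generator of F_q^*. If the Frobenius x ↦ x^p maps the coset Cω to Cω^3, then p ≡ 3 (mod 4) and r is even. -/
/-!
Since `ω` generates `F_q^*`, the Frobenius sends `ω` to `ω ^ p`, and the hypothesis places this in
`C ω ^ 3`; so `ω ^ p = ω ^ (4k + 3)`, i.e. `p ≡ 4k + 3 (mod q - 1)`, and as `4 ∣ q - 1` this gives
`p ≡ 3 (mod 4)`. Then `1 ≡ q = p ^ r ≡ (-1) ^ r (mod 4)`, which forces `r` to be even.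
-/

theorem Int.ModEq.of_zpow_mem_image_mul_zpowers {G : Type*} [Group G] {ω : G} {d : ℕ}
    (hd : d ∣ orderOf ω) {a b : ℤ}
    (h : ω ^ a ∈ (· * ω ^ b) '' (Subgroup.zpowers (ω ^ d) : Set G)) :
    a ≡ b [ZMOD d] := by
  obtain ⟨_, ⟨k, rfl⟩, hk⟩ := h
  have hpow : ω ^ a = ω ^ (d * k + b) := by
    rw [← hk, zpow_add, zpow_mul, zpow_natCast]
  have hmod : a ≡ d * k + b [ZMOD d] :=
    (zpow_eq_zpow_iff_modEq.mp hpow).of_dvd (Int.natCast_dvd_natCast.mpr hd)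
  simpa using hmod

theorem Nat.even_of_modEq_three_of_pow_modEq_one {p r : ℕ} (hp : p ≡ 3 [MOD 4])
    (hpr : p ^ r ≡ 1 [MOD 4]) : Even r := by
  rw [← ZMod.natCast_eq_natCast_iff] at hp hpr
  push_cast at hp hpr
  rw [hp, show (3 : ZMod 4) = -1 by decide] at hpr
  exact (neg_one_pow_eq_one_iff_even (by decide)).mp hpr

theorem stmt_16_general (p r : ℕ)
    (F : Type*) [Field F] [Fintype F] (hcard : Fintype.card F = p ^ r)
    (h4 : 4 ∣ p ^ r - 1)
    (ω : Fˣ) (hω : ∀ x : Fˣ, x ∈ Subgroup.zpowers ω)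
    (hfrob : (fun x : Fˣ => x ^ p) '' ((· * ω) '' (Subgroup.zpowers (ω ^ 4) : Set Fˣ)) =
      (· * ω ^ 3) '' (Subgroup.zpowers (ω ^ 4) : Set Fˣ)) :
    p % 4 = 3 ∧ Even r := by
  classical
  have hord : orderOf ω = p ^ r - 1 := by
    rw [orderOf_eq_card_of_forall_mem_zpowers hω, Nat.card_eq_fintype_card, Fintype.card_units,
      hcard]
  have hfrob_ω : ω ^ (p : ℤ) ∈ (· * ω ^ (3 : ℤ)) '' (Subgroup.zpowers (ω ^ 4) : Set Fˣ) := by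
    rw [zpow_natCast, zpow_ofNat, ← hfrob]
    exact ⟨ω, ⟨1, Subgroup.one_mem _, one_mul ω⟩, rfl⟩
  have hp4 : p % 4 = 3 := by
    have hp_mod := Int.ModEq.of_zpow_mem_image_mul_zpowers (hord ▸ h4) hfrob_ω
    unfold Int.ModEq at hp_mod
    omega
  have hq : 1 ≤ p ^ r := hcard ▸ Fintype.card_pos
  refine ⟨hp4, Nat.even_of_modEq_three_of_pow_modEq_one hp4 ?_⟩
  unfold Nat.ModEq
  omega

theorem stmt_16 (p r : ℕ) (hp : p.Prime) (hr : 0 < r)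
    (F : Type*) [Field F] [Fintype F] (hcard : Fintype.card F = p ^ r)
    (h4 : 4 ∣ p ^ r - 1)
    (ω : Fˣ) (hω : ∀ x : Fˣ, x ∈ Subgroup.zpowers ω)
    (hfrob : (fun x : Fˣ => x ^ p) '' ((· * ω) '' (Subgroup.zpowers (ω ^ 4) : Set Fˣ)) =
      (· * ω ^ 3) '' (Subgroup.zpowers (ω ^ 4) : Set Fˣ)) :
    p % 4 = 3 ∧ Even r :=
  stmt_16_general p r F hcard h4 ω hω hfrob
end
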